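/- arXiv:math/0104283 — 2 statements merged into one kernel-verified Lean document; each statement's English description precedes it below -/
import Mathlib

section
/- Let C be a finite subset of ℤ^s and ⪯ an admissible order on ℕ^s, extended to the group ℤ^s by translation invariance (γ ⪯ μ iff γ + δ ⪯ μ + δ whenever all terms lie in ℕ^s after a common translation). If every element of C is strictly ⪯-less than 0, then there exists a vector w ∈ ℕ^s with all entries strictly positive such that ⟨w, α⟩ < 0 for every α ∈ C. -/
/-- An admissible order on ℕ^s. -/
def IsAdmissibleOrder {s : ℕ} (r : (Fin s → ℕ) → (Fin s → ℕ) → Prop) : Prop :=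
  IsLinearOrder (Fin s → ℕ) r ∧
    (∀ α β γ : Fin s → ℕ, r α β → r (α + γ) (β + γ)) ∧
    (∀ α : Fin s → ℕ, r 0 α)

/-- The translation-invariant extension of an admissible order on ℕ^s to ℤ^s:
γ ⪯ μ iff after a common translation by a natural vector both land in ℕ^s
and are related by r there. -/
def extOrder {s : ℕ} (r : (Fin s → ℕ) → (Fin s → ℕ) → Prop)
    (γ μ : Fin s → ℤ) : Prop :=
  ∃ a b d : Fin s → ℕ, (∀ i, γ i + (d i : ℤ) = (a i : ℤ)) ∧
    (∀ i, μ i + (d i : ℤ) = (b i : ℤ)) ∧ r a b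


/-!
Adjoin the vectors `-eᵢ` to `C`; they are `⪯ 0` because `0 ⪯ eᵢ`. The set of `v ⪯ 0` is an
additive submonoid of `ℤ^s` meeting its negative only in `0`, so no combination of elements of `C`
with positive integer coefficients vanishes. Hence `0` is not in the real convex hull of `C`: by
Carathéodory it would be a positive combination of affinely independent integer points, whose
barycentric coordinates are forced to be rational. Hahn–Banach then gives a real `y` with
`⟨y, c⟩ < 0` on `C`; this condition is open, so `y` may be taken rational and, after clearing
denominators, integral. Pairing with `-eᵢ` shows that its entries are positive.
-/

open Finset

theorem AffineIndependent.exists_rat_eq_weight {ι κ : Type*} [Fintype ι] {c : ι → κ → ℤ}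
    (hc : AffineIndependent ℝ fun i => (Int.cast ∘ c i : κ → ℝ)) {w : ι → ℝ}
    (hw1 : ∑ i, w i = 1) (hw0 : ∑ i, w i • (Int.cast ∘ c i : κ → ℝ) = 0) (i : ι) :
    ∃ q : ℚ, (q : ℝ) = w i := by
  -- A `ℚ`-linear retraction `π : ℝ → ℚ` turns `w` into another affine relation among the same
  -- integer points, so affine independence forces `π ∘ w = w`.
  obtain ⟨π, hπ⟩ := (Algebra.linearMap ℚ ℝ).exists_leftInverse_of_injective
    (LinearMap.ker_eq_bot.2 Rat.cast_injective)
  have hπ_cast (q : ℚ) : π q = q := LinearMap.congr_fun hπ q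
  have hsum : ∑ j, (w j - π (w j)) = 0 := by
    rw [sum_sub_distrib, ← Rat.cast_sum, ← map_sum, hw1, ← Rat.cast_one, hπ_cast]
    simp
  have hcomb : ∑ j, (w j - π (w j)) • (Int.cast ∘ c j : κ → ℝ) = 0 := by
    funext k
    have hk : ∑ j, c j k • w j = 0 := by simpa [mul_comm] using congrFun hw0 k
    have hπk : ∑ j, (π (w j) : ℝ) * c j k = 0 := by
      have := congrArg (fun x => (π x : ℝ)) hk
      simp only [map_sum, map_zsmul, map_zero] at this
      simpa [mul_comm] using this
    simpa [sub_mul, sum_sub_distrib, hπk] using congrFun hw0 k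
  have hw_eq := affineIndependent_iff.1 hc univ _ hsum hcomb i (mem_univ i)
  exact ⟨π (w i), (sub_eq_zero.1 hw_eq).symm⟩

theorem Rat.exists_nat_mul_eq_intCast {ι : Type*} [Fintype ι] (q : ι → ℚ) :
    ∃ D : ℕ, 0 < D ∧ ∀ i, ∃ m : ℤ, (m : ℚ) = D * q i := by
  classical
  refine ⟨∏ j, (q j).den, prod_pos fun j _ => (q j).pos, fun i =>
    ⟨(q i).num * ∏ j ∈ univ.erase i, ((q j).den : ℤ), ?_⟩⟩
  push_cast
  rw [← mul_prod_erase univ _ (mem_univ i), ← Rat.den_mul_eq_num]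
  ring

theorem AddSubmonoid.sum_nsmul_ne_zero {M ι : Type*} [AddCommGroup M] [Fintype ι]
    {N : AddSubmonoid M} (hN : ∀ v ∈ N, -v ∈ N → v = 0) {c : ι → M} (hcN : ∀ i, c i ∈ N)
    {n : ι → ℕ} (i : ι) (hni : 0 < n i) (hci : c i ≠ 0) : ∑ j, n j • c j ≠ 0 := by
  classical
  intro h
  have hrest : (n i - 1) • c i + ∑ j ∈ univ.erase i, n j • c j ∈ N :=
    add_mem (nsmul_mem (hcN i) _) (N.sum_mem fun j _ => nsmul_mem (hcN j) _)
  have hsplit : c i + ((n i - 1) • c i + ∑ j ∈ univ.erase i, n j • c j) = 0 := by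
    rw [← h, ← add_sum_erase univ _ (mem_univ i), ← add_assoc, ← succ_nsmul',
      Nat.sub_add_cancel hni]
  exact hci (hN _ (hcN i) (by rwa [neg_eq_of_add_eq_zero_right hsplit]))

theorem zero_notMem_convexHull_intCast {κ : Type*} {N : AddSubmonoid (κ → ℤ)}
    (hN : ∀ v ∈ N, -v ∈ N → v = 0) {C : Set (κ → ℤ)} (hCN : C ⊆ N) (hC0 : 0 ∉ C) :
    (0 : κ → ℝ) ∉ convexHull ℝ ((fun c => (Int.cast ∘ c : κ → ℝ)) '' C) := by
  intro h
  obtain ⟨ι, _, z, w, hzC, hz, hw_pos, hw1, hw0⟩ := eq_pos_convex_span_of_mem_convexHull h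
  choose c hcC hcz using fun i => hzC ⟨i, rfl⟩
  obtain rfl : (fun i => (Int.cast ∘ c i : κ → ℝ)) = z := funext hcz
  choose q hq using hz.exists_rat_eq_weight hw1 hw0
  obtain ⟨D, hD, hm⟩ := Rat.exists_nat_mul_eq_intCast q
  choose m hm using hm
  have hm_real (i) : (m i : ℝ) = D * w i := by rw [← hq, ← Rat.cast_intCast, hm]; push_cast; rfl
  have hm_pos (i) : 0 < m i := by
    have : (0 : ℝ) < m i := by rw [hm_real]; exact mul_pos (by exact_mod_cast hD) (hw_pos i)
    exact_mod_cast this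
  have hrel : ∑ i, (m i).toNat • c i = 0 := by
    funext k
    have : ((∑ i, (m i).toNat • c i) k : ℝ) = D * (∑ i, w i • (Int.cast ∘ c i : κ → ℝ)) k := by
      simp [Finset.sum_apply, mul_sum, hm_real, Int.toNat_of_nonneg (hm_pos _).le, mul_assoc]
    rw [hw0, Pi.zero_apply, mul_zero] at this
    exact_mod_cast this
  obtain ⟨i⟩ : Nonempty ι := by
    by_contra hι
    simp [not_nonempty_iff.1 hι] at hw1
  exact N.sum_nsmul_ne_zero hN (fun i => hCN (hcC i)) i (by simpa using hm_pos i)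
    (fun h => hC0 (h ▸ hcC i)) hrel

theorem exists_dotProduct_neg_of_zero_notMem_convexHull {κ : Type*} [Fintype κ]
    {S : Set (κ → ℝ)} (hS : S.Finite) (h : (0 : κ → ℝ) ∉ convexHull ℝ S) :
    ∃ y : κ → ℝ, ∀ x ∈ S, y ⬝ᵥ x < 0 := by
  classical
  obtain ⟨f, u, hf0, hfS⟩ := geometric_hahn_banach_point_closed (convex_convexHull ℝ S)
    (hS.isClosed_convexHull (𝕜 := ℝ)) h
  refine ⟨fun k => -f (fun j => if k = j then 1 else 0), fun x hx => ?_⟩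
  have hfx := f.toLinearMap.pi_apply_eq_sum_univ x
  have := hfS x (subset_convexHull ℝ S hx)
  simp only [map_zero] at hf0
  simp only [ContinuousLinearMap.coe_coe, smul_eq_mul] at hfx
  have hyx : (fun k => -f (fun j => if k = j then 1 else 0)) ⬝ᵥ x = -f x := by
    rw [hfx, dotProduct, ← sum_neg_distrib]
    exact sum_congr rfl fun k _ => by ring
  linarith

theorem exists_int_dotProduct_neg_of_real {κ : Type*} [Fintype κ] {C : Finset (κ → ℤ)}
    {y : κ → ℝ} (hy : ∀ c ∈ C, y ⬝ᵥ (Int.cast ∘ c) < 0) :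
    ∃ m : κ → ℤ, ∀ c ∈ C, m ⬝ᵥ c < 0 := by
  have hU : IsOpen (⋂ c ∈ C, {y : κ → ℝ | y ⬝ᵥ (Int.cast ∘ c) < 0}) :=
    isOpen_biInter_finset fun c _ =>
      isOpen_lt (continuous_id.dotProduct continuous_const) continuous_const
  have hdense : DenseRange (Pi.map fun _ => ((↑) : ℚ → ℝ) : (κ → ℚ) → κ → ℝ) :=
    DenseRange.piMap fun _ => Rat.denseRange_cast
  obtain ⟨q, hq⟩ := hdense.exists_mem_open hU ⟨y, Set.mem_iInter₂.2 hy⟩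
  rw [Set.mem_iInter₂] at hq
  obtain ⟨D, hD, hm⟩ := Rat.exists_nat_mul_eq_intCast q
  choose m hm using hm
  refine ⟨m, fun c hc => ?_⟩
  have hm_real (k) : (m k : ℝ) = D * q k := by rw [← Rat.cast_intCast, hm]; push_cast; rfl
  have : ((m ⬝ᵥ c : ℤ) : ℝ) = D * ((Pi.map fun _ => ((↑) : ℚ → ℝ)) q ⬝ᵥ (Int.cast ∘ c)) := by
    simp [dotProduct, hm_real, mul_sum, mul_assoc]
  have hneg : ((m ⬝ᵥ c : ℤ) : ℝ) < 0 := by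
    rw [this]; exact mul_neg_of_pos_of_neg (by exact_mod_cast hD) (hq c hc)
  exact_mod_cast hneg

theorem exists_int_dotProduct_neg_of_pointed {κ : Type*} [Fintype κ] {N : AddSubmonoid (κ → ℤ)}
    (hN : ∀ v ∈ N, -v ∈ N → v = 0) {C : Finset (κ → ℤ)} (hCN : ↑C ⊆ (N : Set (κ → ℤ)))
    (hC0 : 0 ∉ C) : ∃ m : κ → ℤ, ∀ c ∈ C, m ⬝ᵥ c < 0 := by
  obtain ⟨y, hy⟩ := exists_dotProduct_neg_of_zero_notMem_convexHull (C.finite_toSet.image _)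
    (zero_notMem_convexHull_intCast hN hCN hC0)
  exact exists_int_dotProduct_neg_of_real fun c hc => hy _ (Set.mem_image_of_mem _ hc)

theorem extOrder_zero_iff {s : ℕ} {r : (Fin s → ℕ) → (Fin s → ℕ) → Prop} {v : Fin s → ℤ} :
    extOrder r v 0 ↔ ∃ a b, r a b ∧ ∀ i, v i = a i - b i := by
  constructor
  · rintro ⟨a, b, d, hv, hd, hab⟩
    refine ⟨a, b, hab, fun i => ?_⟩
    have hvi := hv i
    have hdi := hd i
    rw [Pi.zero_apply, zero_add] at hdi
    omega
  · rintro ⟨a, b, hab, hv⟩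
    exact ⟨a, b, b, fun i => by rw [hv]; ring, fun i => by simp, hab⟩

namespace IsAdmissibleOrder

variable {s : ℕ} {r : (Fin s → ℕ) → (Fin s → ℕ) → Prop}

theorem add_rel_add (hr : IsAdmissibleOrder r) {a b a' b' : Fin s → ℕ} (h : r a b)
    (h' : r a' b') : r (a + a') (b + b') := by
  have := hr.1
  refine _root_.trans (hr.2.1 _ _ a' h) ?_
  simpa only [add_comm b] using hr.2.1 _ _ b h'

def nonposCone (hr : IsAdmissibleOrder r) : AddSubmonoid (Fin s → ℤ) where
  carrier := {v | extOrder r v 0}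
  zero_mem' := extOrder_zero_iff.2 ⟨0, 0, hr.2.2 0, fun i => by simp⟩
  add_mem' := by
    rintro v v' hv hv'
    obtain ⟨a, b, hab, hv⟩ := extOrder_zero_iff.1 hv
    obtain ⟨a', b', hab', hv'⟩ := extOrder_zero_iff.1 hv'
    exact extOrder_zero_iff.2 ⟨a + a', b + b', hr.add_rel_add hab hab',
      fun i => by simp [hv, hv']; ring⟩

theorem eq_zero_of_mem_nonposCone (hr : IsAdmissibleOrder r) {v : Fin s → ℤ}
    (hv : v ∈ hr.nonposCone) (hv' : -v ∈ hr.nonposCone) : v = 0 := by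
  have := hr.1
  obtain ⟨a, b, hab, hv⟩ := extOrder_zero_iff.1 hv
  obtain ⟨a', b', hab', hv'⟩ := extOrder_zero_iff.1 hv'
  have hsum : b + b' = a + a' := by
    funext i
    have hvi := hv i
    have hvi' := hv' i
    rw [Pi.neg_apply] at hvi'
    simp only [Pi.add_apply]
    omega
  have h1 : r (a + a') (b + a') := hr.2.1 _ _ _ hab
  have h2 : r (b + a') (a + a') := by
    rw [← hsum, add_comm b, add_comm b]; exact hr.2.1 _ _ b hab'
  have hab_eq : a = b := add_right_cancel (antisymm_of r h1 h2)
  funext i; simp [hv, hab_eq]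

theorem neg_single_mem_nonposCone (hr : IsAdmissibleOrder r) (i : Fin s) :
    -Pi.single i 1 ∈ hr.nonposCone :=
  extOrder_zero_iff.2 ⟨0, Pi.single i 1, hr.2.2 _, fun j => by
    by_cases h : j = i <;> simp [h]⟩

end IsAdmissibleOrder

/-- If every element of a finite set C ⊆ ℤ^s is strictly below 0 for the extension
of an admissible order, then some strictly positive integer weight vector w has
negative dot product with every element of C. -/
theorem stmt3 {s : ℕ} (r : (Fin s → ℕ) → (Fin s → ℕ) → Prop)
    (hr : IsAdmissibleOrder r) (C : Finset (Fin s → ℤ))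
    (hC : ∀ c ∈ C, extOrder r c 0 ∧ c ≠ 0) :
    ∃ w : Fin s → ℕ, (∀ i, 0 < w i) ∧ ∀ c ∈ C, ∑ i, (w i : ℤ) * c i < 0 := by
  set C' := C ∪ univ.image fun i => -Pi.single i 1
  have hC'N : ↑C' ⊆ (hr.nonposCone : Set (Fin s → ℤ)) := by
    intro c hc
    rcases mem_union.1 (mem_coe.1 hc) with hc | hc
    · exact (hC c hc).1
    · obtain ⟨i, -, rfl⟩ := mem_image.1 hc
      exact hr.neg_single_mem_nonposCone i
  have hC'0 : 0 ∉ C' := by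
    intro h0
    rcases mem_union.1 h0 with h0 | h0
    · exact (hC 0 h0).2 rfl
    · obtain ⟨i, -, hi⟩ := mem_image.1 h0
      simpa using congrFun hi i
  obtain ⟨y, hy⟩ := exists_int_dotProduct_neg_of_pointed
    (fun _ hv hv' => hr.eq_zero_of_mem_nonposCone hv hv') hC'N hC'0
  have hy_pos (i : Fin s) : 0 < y i := by
    simpa using hy _ (mem_union_right _ (mem_image_of_mem _ (mem_univ i)))
  refine ⟨fun i => (y i).toNat, fun i => by simpa using hy_pos i, fun c hc => ?_⟩
  simpa [dotProduct, Int.toNat_of_nonneg (hy_pos _).le] using hy c (mem_union_left _ hc)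
end

section
/- Let Λ be a field k and consider R with elements x_1, …, x_s such that {x^α : α ∈ ℕ^s} is a k-basis of R and x_j x_i = q_{ji} x_i x_j + Σ_{α ∈ Γ_{ji}} c_α x^α for i < j, where every α ∈ Γ_{ji} satisfies α ≺' ε_i + ε_j for an admissible order ⪯' on ℕ^s and q_{ji} ∈ k^×. Then the filtration H_β(R) = span_k { x^γ : γ ⪯' β } satisfies H_β(R) · H_δ(R) ⊆ H_{β+δ}(R), i.e., it is an (ℕ^s, ⪯')-filtration of R. -/
/-- The standard (ordered) monomial x^γ = x_1^{γ_1} ⋯ x_s^{γ_s}. -/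
def stdMono {R : Type*} [Ring R] {s : ℕ} (x : Fin s → R) (γ : Fin s → ℕ) : R :=
  (List.ofFn fun i => x i ^ γ i).prod

/-- The i-th standard basis vector ε_i of ℕ^s. -/
def eps {s : ℕ} (i : Fin s) : Fin s → ℕ := fun j => if j = i then 1 else 0

namespace IsAdmissibleOrder

variable {s : ℕ} {rel : (Fin s → ℕ) → (Fin s → ℕ) → Prop} {α β γ δ : Fin s → ℕ}

theorem add_right (hrel : IsAdmissibleOrder rel) (h : rel α β) (γ : Fin s → ℕ) :
    rel (α + γ) (β + γ) :=
  hrel.2.1 α β γ h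

theorem add (hrel : IsAdmissibleOrder rel) (hαβ : rel α β) (hγδ : rel γ δ) :
    rel (α + γ) (β + δ) := by
  have := hrel.1
  refine _root_.trans (hrel.add_right hαβ γ) ?_
  simpa only [add_comm β] using hrel.add_right hγδ β

theorem of_le (hrel : IsAdmissibleOrder rel) (h : α ≤ β) : rel α β := by
  obtain ⟨γ, rfl⟩ : ∃ γ, β = γ + α := ⟨β - α, by ext i; simp [Nat.sub_add_cancel (h i)]⟩
  simpa using hrel.add_right (hrel.2.2 γ) α

theorem wellQuasiOrdered (hrel : IsAdmissibleOrder rel) : WellQuasiOrdered rel := fun f =>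
  let ⟨m, n, hmn, hle⟩ := wellQuasiOrdered_le f
  ⟨m, n, hmn, hrel.of_le hle⟩

theorem wellFounded (hrel : IsAdmissibleOrder rel) : WellFounded fun α β => rel α β ∧ ¬ rel β α :=
  have := hrel.1
  hrel.wellQuasiOrdered.wellFounded

theorem add_right_strict (hrel : IsAdmissibleOrder rel) (h : rel α β ∧ α ≠ β)
    (γ : Fin s → ℕ) : rel (α + γ) (β + γ) ∧ ¬ rel (β + γ) (α + γ) := by
  have := hrel.1
  exact ⟨hrel.add_right h.1 γ,
    fun h' => h.2 (add_right_cancel (antisymm (hrel.add_right h.1 γ) h'))⟩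

end IsAdmissibleOrder

namespace PBW

variable {s : ℕ}

def exponent (w : List (Fin s)) : Fin s → ℕ := fun i => w.count i

def inversions : List (Fin s) → ℕ
  | [] => 0
  | a :: w => w.countP (· < a) + inversions w

def sortedWord (γ : Fin s → ℕ) : List (Fin s) :=
  (List.ofFn fun i => List.replicate (γ i) i).flatten

theorem exponent_append (u v : List (Fin s)) : exponent (u ++ v) = exponent u + exponent v := by
  ext i; simp [exponent]

theorem exponent_append_append (u m v : List (Fin s)) :
    exponent (u ++ m ++ v) = exponent m + exponent (u ++ v) := by
  simp only [exponent_append]; abel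

theorem exponent_pair (i j : Fin s) : exponent [j, i] = eps i + eps j := by
  ext t; simp only [exponent, eps, List.count_cons, List.count_nil, beq_iff_eq, Pi.add_apply]
  split_ifs <;> omega

theorem exponent_sortedWord (γ : Fin s → ℕ) : exponent (sortedWord γ) = γ := by
  ext i
  simp [exponent, sortedWord, List.count_flatten, List.sum_ofFn, List.count_replicate]

theorem _root_.List.Perm.exponent_eq {u v : List (Fin s)} (h : u.Perm v) :
    exponent u = exponent v :=
  funext h.count_eq

theorem pairwise_sortedWord (γ : Fin s → ℕ) : (sortedWord γ).Pairwise (· ≤ ·) := by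
  refine List.pairwise_flatten.2 ⟨?_, List.pairwise_ofFn.2 fun i j hij a ha b hb => ?_⟩
  · simp only [List.mem_ofFn, forall_exists_index]
    rintro _ i rfl
    exact List.pairwise_replicate.2 (Or.inr le_rfl)
  · rw [List.eq_of_mem_replicate ha, List.eq_of_mem_replicate hb]
    exact hij.le

theorem eq_sortedWord_of_pairwise {w : List (Fin s)} (h : w.Pairwise (· ≤ ·)) :
    w = sortedWord (exponent w) :=
  (List.perm_iff_count.2 fun a =>
    (congrFun (exponent_sortedWord (exponent w)) a).symm).eq_of_pairwise' h (pairwise_sortedWord _)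


theorem inversions_lt_of_swap (u v : List (Fin s)) {i j : Fin s} (hij : i < j) :
    inversions (u ++ i :: j :: v) < inversions (u ++ j :: i :: v) := by
  induction u with
  | nil => simp [inversions, hij, not_lt_of_gt hij]; omega
  | cons a u ih =>
    simp only [List.cons_append, inversions]
    rw [((List.Perm.swap j i v).append_left u).countP_eq]
    omega

theorem exists_descent_of_not_pairwise {w : List (Fin s)} (h : ¬ w.Pairwise (· ≤ ·)) :
    ∃ u i j v, w = u ++ j :: i :: v ∧ i < j := by
  induction w with
  | nil => simp at h
  | cons a w ih =>
    by_cases hw : w.Pairwise (· ≤ ·)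
    · cases w with
      | nil => simp at h
      | cons b w =>
        refine ⟨[], b, a, w, rfl, lt_of_not_ge fun hab => h ?_⟩
        exact List.pairwise_cons.2 ⟨List.forall_mem_cons.2
          ⟨hab, fun c hc => hab.trans (List.rel_of_pairwise_cons hw hc)⟩, hw⟩
    · obtain ⟨u, i, j, v, rfl, hij⟩ := ih hw
      exact ⟨a :: u, i, j, v, rfl, hij⟩

variable {k R : Type*} [CommSemiring k] [Ring R] [Algebra k R] (x : Fin s → R)

def wordProd (w : List (Fin s)) : R := (w.map x).prod

theorem wordProd_sortedWord (γ : Fin s → ℕ) : wordProd x (sortedWord γ) = stdMono x γ := by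
  simp [wordProd, sortedWord, stdMono, List.map_flatten, List.prod_flatten, Function.comp_def]

theorem wordProd_of_pairwise {w : List (Fin s)} (h : w.Pairwise (· ≤ ·)) :
    wordProd x w = stdMono x (exponent w) := by
  rw [eq_sortedWord_of_pairwise h, wordProd_sortedWord, exponent_sortedWord]

theorem wordProd_swap {i j : Fin s} {q : k} {Γ : Finset (Fin s → ℕ)} {c : (Fin s → ℕ) → k}
    (hji : x j * x i = q • (x i * x j) + ∑ α ∈ Γ, c α • stdMono x α) (u v : List (Fin s)) :
    wordProd x (u ++ j :: i :: v) =
      q • wordProd x (u ++ i :: j :: v) + ∑ α ∈ Γ, c α • wordProd x (u ++ sortedWord α ++ v) := by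
  have hsplit : ∀ m, wordProd x (u ++ m ++ v) = wordProd x u * wordProd x m * wordProd x v :=
    fun m => by simp [wordProd, mul_assoc]
  have hpair : ∀ a b, wordProd x [a, b] = x a * x b := fun a b => by simp [wordProd]
  simp only [show ∀ a b, u ++ a :: b :: v = u ++ [a, b] ++ v by simp, hsplit, hpair, hji,
    wordProd_sortedWord, add_mul, mul_add, Finset.sum_mul, Finset.mul_sum, smul_mul_assoc,
    mul_smul_comm]

variable {rel : (Fin s → ℕ) → (Fin s → ℕ) → Prop}

def HasStraighteningRelations (rel : (Fin s → ℕ) → (Fin s → ℕ) → Prop) (q : Fin s → Fin s → k) :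
    Prop :=
  ∀ i j : Fin s, i < j → ∃ Γ : Finset (Fin s → ℕ),
    (∀ α ∈ Γ, rel α (eps i + eps j) ∧ α ≠ eps i + eps j) ∧
    ∃ c : (Fin s → ℕ) → k, x j * x i = q j i • (x i * x j) + ∑ α ∈ Γ, c α • stdMono x α

variable (k) in
def monomialFiltration (rel : (Fin s → ℕ) → (Fin s → ℕ) → Prop) (β : Fin s → ℕ) :
    Submodule k R :=
  Submodule.span k {z : R | ∃ γ, rel γ β ∧ z = stdMono x γ}

theorem stdMono_mem_monomialFiltration {γ β : Fin s → ℕ} (h : rel γ β) :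
    stdMono x γ ∈ monomialFiltration k x rel β :=
  Submodule.subset_span ⟨γ, h, rfl⟩

theorem monomialFiltration_mono [IsTrans (Fin s → ℕ) rel] {β β' : Fin s → ℕ} (h : rel β β') :
    monomialFiltration k x rel β ≤ monomialFiltration k x rel β' :=
  Submodule.span_le.2 <| by
    rintro _ ⟨γ, hγ, rfl⟩
    exact stdMono_mem_monomialFiltration x (_root_.trans hγ h)

theorem wordProd_mem_monomialFiltration (hrel : IsAdmissibleOrder rel) {q : Fin s → Fin s → k}
    (hrelations : HasStraighteningRelations x rel q) (w : List (Fin s)) :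
    wordProd x w ∈ monomialFiltration k x rel (exponent w) := by
  have := hrel.1
  -- induction on the exponent for the strict part of `rel`, then on the number of inversions
  suffices ∀ β n w, exponent w = β → inversions w = n →
      wordProd x w ∈ monomialFiltration k x rel β from this _ _ w rfl rfl
  intro β
  induction β using hrel.wellFounded.induction with | _ β ihβ => ?_
  intro n
  induction n using Nat.strong_induction_on with | _ n ihn => ?_
  rintro w rfl rfl
  by_cases hw : w.Pairwise (· ≤ ·)
  · rw [wordProd_of_pairwise x hw]
    exact stdMono_mem_monomialFiltration x (refl _)
  obtain ⟨u, i, j, v, rfl, hij⟩ := exists_descent_of_not_pairwise hw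
  obtain ⟨Γ, hΓ, c, hji⟩ := hrelations i j hij
  rw [wordProd_swap x hji]
  refine add_mem (Submodule.smul_mem _ _ ?_) (sum_mem fun α hα => Submodule.smul_mem _ _ ?_)
  · exact ihn _ (inversions_lt_of_swap u v hij) _
      ((List.Perm.swap j i v).append_left u).exponent_eq rfl
  · have hexp : exponent (u ++ j :: i :: v) = eps i + eps j + exponent (u ++ v) := by
      simpa [exponent_pair] using exponent_append_append u [j, i] v
    have hexpα : exponent (u ++ sortedWord α ++ v) = α + exponent (u ++ v) := by
      rw [exponent_append_append, exponent_sortedWord]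
    have hlt := hrel.add_right_strict (hΓ α hα) (exponent (u ++ v))
    rw [← hexpα, ← hexp] at hlt
    exact monomialFiltration_mono x hlt.1 (ihβ _ hlt _ _ rfl rfl)

theorem stdMono_mul_stdMono_mem (hrel : IsAdmissibleOrder rel) {q : Fin s → Fin s → k}
    (hrelations : HasStraighteningRelations x rel q) (γ γ' : Fin s → ℕ) :
    stdMono x γ * stdMono x γ' ∈ monomialFiltration k x rel (γ + γ') := by
  simpa [wordProd, exponent_append, exponent_sortedWord, ← wordProd_sortedWord x] using
    wordProd_mem_monomialFiltration x hrel hrelations (sortedWord γ ++ sortedWord γ')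

theorem monomialFiltration_mul_le (hrel : IsAdmissibleOrder rel) {q : Fin s → Fin s → k}
    (hrelations : HasStraighteningRelations x rel q) (β δ : Fin s → ℕ) :
    monomialFiltration k x rel β * monomialFiltration k x rel δ ≤
      monomialFiltration k x rel (β + δ) := by
  have := hrel.1
  rw [monomialFiltration, monomialFiltration, Submodule.span_mul_span, Submodule.span_le]
  rintro _ ⟨_, ⟨γ, hγ, rfl⟩, _, ⟨γ', hγ', rfl⟩, rfl⟩
  exact monomialFiltration_mono x (hrel.add hγ hγ')
    (stdMono_mul_stdMono_mem x hrel hrelations γ γ')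

end PBW

theorem stmt18_general {k : Type*} [Field k] {R : Type*} [Ring R] [Algebra k R]
    {s : ℕ} (x : Fin s → R)
    (rel : (Fin s → ℕ) → (Fin s → ℕ) → Prop) (hrel : IsAdmissibleOrder rel)
    (q : Fin s → Fin s → k)
    (hrelations : ∀ i j : Fin s, i < j → ∃ Γ : Finset (Fin s → ℕ),
      (∀ α ∈ Γ, rel α (eps i + eps j) ∧ α ≠ eps i + eps j) ∧
      ∃ c : (Fin s → ℕ) → k,
        x j * x i = q j i • (x i * x j) + ∑ α ∈ Γ, c α • stdMono x α) :
    ∀ β δ : Fin s → ℕ,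
      ∀ a ∈ Submodule.span k {z : R | ∃ γ, rel γ β ∧ z = stdMono x γ},
      ∀ b ∈ Submodule.span k {z : R | ∃ γ, rel γ δ ∧ z = stdMono x γ},
        a * b ∈ Submodule.span k {z : R | ∃ γ, rel γ (β + δ) ∧ z = stdMono x γ} :=
  fun β δ _ ha _ hb =>
    PBW.monomialFiltration_mul_le x hrel hrelations β δ (Submodule.mul_mem_mul ha hb)

/-- Let R be a k-algebra with k-basis the standard monomials x^α in x_1, …, x_s,
subject to relations x_j x_i = q_{ji} x_i x_j + Σ_{α ∈ Γ_{ji}} c_α x^α (i < j)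
with q_{ji} ≠ 0 and each α ∈ Γ_{ji} strictly ≺'-below ε_i + ε_j for an admissible
order ⪯' on ℕ^s.  Then H_β = span_k{ x^γ : γ ⪯' β } is an (ℕ^s, ⪯')-filtration:
H_β · H_δ ⊆ H_{β+δ}. -/
theorem stmt18 {k : Type*} [Field k] {R : Type*} [Ring R] [Algebra k R]
    {s : ℕ} (x : Fin s → R)
    (hbasis : LinearIndependent k (fun γ : Fin s → ℕ => stdMono x γ))
    (hspan : Submodule.span k (Set.range fun γ : Fin s → ℕ => stdMono x γ) = ⊤)
    (rel : (Fin s → ℕ) → (Fin s → ℕ) → Prop) (hrel : IsAdmissibleOrder rel)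
    (q : Fin s → Fin s → k) (hq : ∀ i j : Fin s, i < j → q j i ≠ 0)
    (hrelations : ∀ i j : Fin s, i < j → ∃ Γ : Finset (Fin s → ℕ),
      (∀ α ∈ Γ, rel α (eps i + eps j) ∧ α ≠ eps i + eps j) ∧
      ∃ c : (Fin s → ℕ) → k,
        x j * x i = q j i • (x i * x j) + ∑ α ∈ Γ, c α • stdMono x α) :
    ∀ β δ : Fin s → ℕ,
      ∀ a ∈ Submodule.span k {z : R | ∃ γ, rel γ β ∧ z = stdMono x γ},
      ∀ b ∈ Submodule.span k {z : R | ∃ γ, rel γ δ ∧ z = stdMono x γ},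
        a * b ∈ Submodule.span k {z : R | ∃ γ, rel γ (β + δ) ∧ z = stdMono x γ} :=
  stmt18_general x rel hrel q hrelations
end
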